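/- Let Γ = {Λ₁,…,Λ_s} be a collection of non-empty subsets of {1,…,r} with connected components C₁,…,C_p, let w ∈ ℂ^r have all entries non-zero, and V_Λ = {v ∈ w^⊥ : v_j = 0 for j ∉ Λ}. Then dim(V_{Λ₁} + ⋯ + V_{Λ_s}) = |Λ₁ ∪ ⋯ ∪ Λ_s| − p. -/

import Mathlib

open Finset
open scoped Classical

/-- For `w ∈ ℂⁿ` and `Λ ⊆ {1,…,n}`, the space `V_Λ = {v ∈ w^⊥ : v_j = 0 ∀ j ∉ Λ}`,
where `w^⊥ = {v : Σⱼ vⱼ wⱼ = 0}`. -/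
noncomputable def Vsub {n : ℕ} (w : Fin n → ℂ) (Λ : Finset (Fin n)) :
    Submodule ℂ (Fin n → ℂ) :=
  (LinearMap.ker (∑ j, w j • (LinearMap.proj j : (Fin n → ℂ) →ₗ[ℂ] ℂ))) ⊓
    ⨅ j ∈ {j | j ∉ Λ}, LinearMap.ker (LinearMap.proj j : (Fin n → ℂ) →ₗ[ℂ] ℂ)

/-- `C` is a connected component of the collection `Λ₁,…,Λ_s`: it is the union of
the `Λ i` for `i` ranging over a connected component of the graph on indices which
joins `i, j` whenever `Λ i ∩ Λ j ≠ ∅`. -/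
def IsConnComp {X : Type*} [DecidableEq X] {s : ℕ} (Λ : Fin s → Finset X)
    (C : Finset X) : Prop :=
  ∃ i : Fin s, C =
    (Finset.univ.filter fun j =>
      Relation.ReflTransGen (fun i' j' => (Λ i' ∩ Λ j').Nonempty) i j).biUnion Λ

/-!
Inside the coordinate space `ℂ^Λ`, `V_Λ` is the kernel of the functional `v ↦ Σ wⱼ vⱼ`, which is
nonzero because `w` has no zero entry; hence `dim V_Λ = |Λ| - 1`. Comparing dimensions then gives
`V_{A ∪ B} = V_A + V_B` whenever `A ∩ B ≠ ∅`, so adding the `V_{Λ i}` along chains of overlapping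
sets shows that the `V_{Λ i}` of one connected component `C` sum to `V_C`. Distinct components are
disjoint, so the `V_{C_k}` form a direct sum, of dimension `Σ (|C_k| - 1) = |Λ₁ ∪ ⋯ ∪ Λ_s| - p`.
-/

open Function

section Overlap

variable {ι X : Type*} [DecidableEq X]

def Overlap (Λ : ι → Finset X) (i j : ι) : Prop := (Λ i ∩ Λ j).Nonempty

instance (Λ : ι → Finset X) : Std.Symm (Overlap Λ) :=
  ⟨fun i j h => by rwa [Overlap, Finset.inter_comm]⟩

variable [Fintype ι]

noncomputable def overlapComponent (Λ : ι → Finset X) (i : ι) : Finset X :=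
  (univ.filter fun j => Relation.ReflTransGen (Overlap Λ) i j).biUnion Λ

lemma isConnComp_iff {s : ℕ} {Λ : Fin s → Finset X} {C : Finset X} :
    IsConnComp Λ C ↔ ∃ i, C = overlapComponent Λ i := Iff.rfl

lemma mem_overlapComponent {Λ : ι → Finset X} {i : ι} {x : X} :
    x ∈ overlapComponent Λ i ↔ ∃ j, Relation.ReflTransGen (Overlap Λ) i j ∧ x ∈ Λ j := by
  simp [overlapComponent]

lemma subset_overlapComponent (Λ : ι → Finset X) (i : ι) : Λ i ⊆ overlapComponent Λ i :=
  fun _ hx => mem_overlapComponent.2 ⟨i, .refl, hx⟩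

lemma overlapComponent_eq_of_mem {Λ : ι → Finset X} {i j : ι} {x : X}
    (hi : x ∈ overlapComponent Λ i) (hj : x ∈ overlapComponent Λ j) :
    overlapComponent Λ i = overlapComponent Λ j := by
  obtain ⟨a, hia, hxa⟩ := mem_overlapComponent.1 hi
  obtain ⟨b, hjb, hxb⟩ := mem_overlapComponent.1 hj
  have hij : Relation.ReflTransGen (Overlap Λ) i j :=
    (hia.tail ⟨x, Finset.mem_inter.2 ⟨hxa, hxb⟩⟩).trans (symm hjb)
  ext y
  simp only [mem_overlapComponent]
  exact ⟨fun ⟨k, hik, hy⟩ => ⟨k, (symm hij).trans hik, hy⟩,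
    fun ⟨k, hjk, hy⟩ => ⟨k, hij.trans hjk, hy⟩⟩

end Overlap

lemma finrank_ker_inf_add_one {K V : Type*} [Field K] [AddCommGroup V] [Module K V]
    [FiniteDimensional K V] (f : Module.Dual K V) {W : Submodule K V} {x : V} (hxW : x ∈ W)
    (hx : f x ≠ 0) :
    Module.finrank K (LinearMap.ker f ⊓ W : Submodule K V) + 1 = Module.finrank K W := by
  have hf : f.domRestrict W ≠ 0 := fun h => hx (LinearMap.congr_fun h ⟨x, hxW⟩)
  rw [← Module.Dual.finrank_ker_add_one_of_ne_zero hf, LinearMap.ker_domRestrict,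
    ← Submodule.finrank_map_subtype_eq, Submodule.map_comap_subtype, inf_comm]

section Vsub

variable {n : ℕ} {w : Fin n → ℂ}

lemma mem_Vsub {Λ : Finset (Fin n)} {v : Fin n → ℂ} :
    v ∈ Vsub w Λ ↔ ∑ j, w j * v j = 0 ∧ ∀ j ∉ Λ, v j = 0 := by
  simp [Vsub, LinearMap.sum_apply]

lemma Vsub_mono {A B : Finset (Fin n)} (h : A ⊆ B) : Vsub w A ≤ Vsub w B := fun _ hv =>
  mem_Vsub.2 ⟨(mem_Vsub.1 hv).1, fun j hj => (mem_Vsub.1 hv).2 j (fun hA => hj (h hA))⟩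

lemma Vsub_inter (A B : Finset (Fin n)) : Vsub w (A ∩ B) = Vsub w A ⊓ Vsub w B := by
  ext v
  simp only [Submodule.mem_inf, mem_Vsub, Finset.mem_inter, not_and_or]
  constructor
  · rintro ⟨hsum, hv⟩
    exact ⟨⟨hsum, fun j hj => hv j (.inl hj)⟩, ⟨hsum, fun j hj => hv j (.inr hj)⟩⟩
  · rintro ⟨⟨hsum, hA⟩, -, hB⟩
    exact ⟨hsum, fun j => Or.rec (hA j) (hB j)⟩

lemma Vsub_empty : Vsub w ∅ = ⊥ := by
  ext v
  simp only [mem_Vsub, Finset.notMem_empty, not_false_eq_true, forall_const,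
    Submodule.mem_bot]
  exact ⟨fun h => funext h.2, fun h => by simp [h]⟩

lemma finrank_Vsub (hw : ∀ j, w j ≠ 0) {Λ : Finset (Fin n)} (hΛ : Λ.Nonempty) :
    Module.finrank ℂ (Vsub w Λ) = Λ.card - 1 := by
  obtain ⟨j, hj⟩ := hΛ
  have hsingle : Pi.single j 1 ∈
      ⨅ k ∈ {k | k ∉ Λ}, LinearMap.ker (LinearMap.proj k : (Fin n → ℂ) →ₗ[ℂ] ℂ) := by
    simp only [Submodule.mem_iInf, LinearMap.mem_ker, LinearMap.proj_apply]
    intro k hk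
    exact Pi.single_eq_of_ne (by rintro rfl; exact hk hj) 1
  have hdim := finrank_ker_inf_add_one (∑ k, w k • (LinearMap.proj k : (Fin n → ℂ) →ₗ[ℂ] ℂ))
    hsingle (by simpa [LinearMap.sum_apply, Pi.single_apply] using hw j)
  rw [(LinearMap.iInfKerProjEquiv ℂ (fun _ => ℂ) (I := Λ) (J := {k | k ∉ Λ})
    (Set.disjoint_left.2 fun _ h h' => h' h) (fun k _ => em (k ∈ Λ))).finrank_eq] at hdim
  simp only [Module.finrank_pi, Finset.coe_sort_coe, Fintype.card_coe] at hdim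
  exact Nat.eq_sub_of_add_eq hdim

lemma Vsub_union (hw : ∀ j, w j ≠ 0) {A B : Finset (Fin n)} (hAB : (A ∩ B).Nonempty) :
    Vsub w (A ∪ B) = Vsub w A ⊔ Vsub w B := by
  have hA : A.Nonempty := hAB.mono Finset.inter_subset_left
  have hB : B.Nonempty := hAB.mono Finset.inter_subset_right
  refine (Submodule.eq_of_le_of_finrank_eq
    (sup_le (Vsub_mono Finset.subset_union_left) (Vsub_mono Finset.subset_union_right)) ?_).symm
  have hsum := Submodule.finrank_sup_add_finrank_inf_eq (Vsub w A) (Vsub w B)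
  have hcard := Finset.card_union_add_card_inter A B
  rw [← Vsub_inter, finrank_Vsub hw hA, finrank_Vsub hw hB, finrank_Vsub hw hAB] at hsum
  rw [finrank_Vsub hw (hA.mono Finset.subset_union_left)]
  have := hA.card_pos
  have := hB.card_pos
  have := hAB.card_pos
  omega

lemma finrank_biSup_Vsub {κ : Type*} {C : κ → Finset (Fin n)} (hC : Pairwise (Disjoint on C))
    (T : Finset κ) :
    Module.finrank ℂ (⨆ k ∈ T, Vsub w (C k) : Submodule ℂ (Fin n → ℂ)) =
      ∑ k ∈ T, Module.finrank ℂ (Vsub w (C k)) := by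
  classical
  induction T using Finset.induction_on with
  | empty => simp
  | @insert a T ha ih =>
    have hle : (⨆ k ∈ T, Vsub w (C k) : Submodule ℂ (Fin n → ℂ)) ≤ Vsub w (T.biUnion C) :=
      iSup₂_le fun k hk => Vsub_mono (Finset.subset_biUnion_of_mem C hk)
    have hdisj : Vsub w (C a) ⊓ ⨆ k ∈ T, Vsub w (C k) = ⊥ := by
      refine eq_bot_iff.2 ((inf_le_inf_left _ hle).trans ?_)
      have hCa : Disjoint (C a) (T.biUnion C) :=
        (Finset.disjoint_biUnion_right _ _ _).2 fun k hk => hC (ne_of_mem_of_not_mem hk ha).symm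
      rw [← Vsub_inter, Finset.disjoint_iff_inter_eq_empty.1 hCa, Vsub_empty]
    have hsum := Submodule.finrank_sup_add_finrank_inf_eq (Vsub w (C a))
      (⨆ k ∈ T, Vsub w (C k) : Submodule ℂ (Fin n → ℂ))
    rw [hdisj, finrank_bot, add_zero] at hsum
    rw [Finset.iSup_insert, hsum, ih, Finset.sum_insert ha]

lemma finrank_iSup_Vsub (hw : ∀ j, w j ≠ 0) {κ : Type*} [Fintype κ] {C : κ → Finset (Fin n)}
    (hne : ∀ k, (C k).Nonempty) (hC : Pairwise (Disjoint on C)) :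
    Module.finrank ℂ (⨆ k, Vsub w (C k) : Submodule ℂ (Fin n → ℂ)) =
      (univ.biUnion C).card - Fintype.card κ := by
  classical
  calc Module.finrank ℂ (⨆ k, Vsub w (C k) : Submodule ℂ (Fin n → ℂ))
      = Module.finrank ℂ (⨆ k ∈ univ, Vsub w (C k) : Submodule ℂ (Fin n → ℂ)) := by
        rw [show (⨆ k ∈ univ, Vsub w (C k) : Submodule ℂ (Fin n → ℂ)) = ⨆ k, Vsub w (C k) by simp]
    _ = ∑ k, Module.finrank ℂ (Vsub w (C k)) := finrank_biSup_Vsub hC univ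
    _ = ∑ k, ((C k).card - 1) := sum_congr rfl fun k _ => finrank_Vsub hw (hne k)
    _ = (univ.biUnion C).card - Fintype.card κ := by
        rw [sum_tsub_distrib _ fun k _ => (hne k).card_pos, card_biUnion fun k _ l _ hkl => hC hkl]
        simp

lemma Vsub_biUnion_le_of_mem {κ : Type*} {P : κ → Finset (Fin n)} {M : Submodule ℂ (Fin n → ℂ)}
    (hw : ∀ j, w j ≠ 0) {x : Fin n} {T : Finset κ} (hT : T.Nonempty) (hx : ∀ k ∈ T, x ∈ P k)
    (hP : ∀ k ∈ T, Vsub w (P k) ≤ M) : Vsub w (T.biUnion P) ≤ M := by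
  induction hT using Finset.Nonempty.cons_induction with
  | singleton a => simpa using hP a
  | cons a T ha hT ih =>
    obtain ⟨b, hb⟩ := hT
    have hxa : x ∈ P a := hx a (Finset.mem_cons_self a T)
    have hxT : x ∈ T.biUnion P := Finset.mem_biUnion.2 ⟨b, hb, hx b (Finset.mem_cons_of_mem hb)⟩
    rw [Finset.cons_eq_insert, Finset.biUnion_insert,
      Vsub_union hw ⟨x, Finset.mem_inter.2 ⟨hxa, hxT⟩⟩]
    exact sup_le (hP a (Finset.mem_cons_self a T)) <|
      ih (fun k hk => hx k (Finset.mem_cons_of_mem hk)) fun k hk => hP k (Finset.mem_cons_of_mem hk)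

variable {ι : Type*} {Λ : ι → Finset (Fin n)}

lemma exists_Vsub_le_iSup_of_reflTransGen (hw : ∀ j, w j ≠ 0) {i j : ι}
    (h : Relation.ReflTransGen (Overlap Λ) i j) :
    ∃ P, Λ i ⊆ P ∧ Λ j ⊆ P ∧ Vsub w P ≤ ⨆ k, Vsub w (Λ k) := by
  induction h with
  | refl => exact ⟨Λ i, subset_rfl, subset_rfl, le_iSup (fun k => Vsub w (Λ k)) i⟩
  | @tail a b _ hab ih =>
    obtain ⟨P, hiP, haP, hP⟩ := ih
    refine ⟨P ∪ Λ b, hiP.trans Finset.subset_union_left, Finset.subset_union_right, ?_⟩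
    rw [Vsub_union hw (hab.mono (Finset.inter_subset_inter_right haP))]
    exact sup_le hP (le_iSup (fun k => Vsub w (Λ k)) b)

lemma Vsub_overlapComponent_le_iSup [Fintype ι] (hw : ∀ j, w j ≠ 0) {i : ι} (hΛ : (Λ i).Nonempty) :
    Vsub w (overlapComponent Λ i) ≤ ⨆ k, Vsub w (Λ k) := by
  obtain ⟨x, hx⟩ := hΛ
  set S := univ.filter fun j => Relation.ReflTransGen (Overlap Λ) i j
  have hS : ∀ j ∈ S, Relation.ReflTransGen (Overlap Λ) i j := fun j hj => (Finset.mem_filter.1 hj).2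
  choose! P hiP hjP hP using fun j hj => exists_Vsub_le_iSup_of_reflTransGen hw (hS j hj)
  calc Vsub w (overlapComponent Λ i) ≤ Vsub w (S.biUnion P) :=
        Vsub_mono (Finset.biUnion_mono fun j hj => hjP j hj)
    _ ≤ ⨆ k, Vsub w (Λ k) :=
        Vsub_biUnion_le_of_mem hw ⟨i, Finset.mem_filter.2 ⟨mem_univ i, .refl⟩⟩
          (fun j hj => hiP j hj hx) hP

end Vsub

/-- If the collection `{Λ₁,…,Λ_s}` of non-empty subsets of `{1,…,r}` has connected
components `C₁,…,C_p`, then `dim(V_{Λ₁} + ⋯ + V_{Λ_s}) = |Λ₁ ∪ ⋯ ∪ Λ_s| − p`. -/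
theorem stmt5 {r : ℕ} (w : Fin r → ℂ) (hw : ∀ j, w j ≠ 0)
    {s p : ℕ} (Λ : Fin s → Finset (Fin r)) (hΛ : ∀ i, (Λ i).Nonempty)
    (C : Fin p → Finset (Fin r)) (hCinj : Function.Injective C)
    (hCC : ∀ k, IsConnComp Λ (C k))
    (hall : ∀ D : Finset (Fin r), IsConnComp Λ D → ∃ k, C k = D) :
    Module.finrank ℂ (⨆ i, Vsub w (Λ i) : Submodule ℂ (Fin r → ℂ)) =
      (Finset.univ.biUnion Λ).card - p := by
  choose root hroot using fun k => isConnComp_iff.1 (hCC k)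
  choose idx hidx using fun i => hall _ (isConnComp_iff.2 ⟨i, rfl⟩)
  have hsub : ∀ i, Λ i ⊆ C (idx i) := fun i => hidx i ▸ subset_overlapComponent Λ i
  have hne : ∀ k, (C k).Nonempty := fun k =>
    hroot k ▸ (hΛ (root k)).mono (subset_overlapComponent Λ (root k))
  have hdisj : Pairwise (Disjoint on C) := fun k l hkl => Finset.disjoint_left.2 fun x hk hl =>
    hkl (hCinj (by rw [hroot k, hroot l] at *; exact overlapComponent_eq_of_mem hk hl))
  have hcover : univ.biUnion C = univ.biUnion Λ := by
    refine subset_antisymm (fun x hx => ?_) (Finset.biUnion_subset.2 fun i _ =>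
      (hsub i).trans (Finset.subset_biUnion_of_mem C (mem_univ _)))
    obtain ⟨k, -, hxk⟩ := Finset.mem_biUnion.1 hx
    obtain ⟨j, -, hxj⟩ := mem_overlapComponent.1 (hroot k ▸ hxk)
    exact Finset.mem_biUnion.2 ⟨j, mem_univ j, hxj⟩
  have hsup : (⨆ i, Vsub w (Λ i) : Submodule ℂ (Fin r → ℂ)) = ⨆ k, Vsub w (C k) := by
    refine le_antisymm (iSup_le fun i => ?_) (iSup_le fun k => ?_)
    · exact (Vsub_mono (hsub i)).trans (le_iSup (fun k => Vsub w (C k)) _)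
    · exact hroot k ▸ Vsub_overlapComponent_le_iSup hw (hΛ (root k))
  rw [hsup, finrank_iSup_Vsub hw hne hdisj, hcover, Fintype.card_fin]
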